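/- Fix constants C# > 0 and Θ > 0. For each j ∈ ℕ (j ≥ 1), let γ_j : [0, L_j] → ℝ² be an injective unit-speed curve of class C⁴ with 0 < L_j ≤ 4π whose curvature κ_j satisfies κ_j(s) > 0, |κ_j'(s)| ≤ C#·(κ_j(s) + 2Θ)², and |κ_j''(s)| ≤ C#·(κ_j(s) + 2Θ)³ for all s ∈ [0, L_j]. Assume that for all s, t ∈ [0, L_j] one has ((1 + 1/j)·κ_j(s)/2)·‖γ_j(s) − γ_j(t)‖² − ⟨γ_j(s) − γ_j(t), ν_j(s)⟩ ≥ 0 (the inscribed radius is at least 1/((1+1/j)·κ_j) at every point), and that κ_j(p_j) = 1 for some p_j ∈ [0, L_j]. Then inf_{s ∈ [0, L_j]} κ_j(s) → 1 as j → ∞. -/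

import Mathlib

/-!
At a point `s` the inscribed gap `F(t) = (cκ(s)/2)‖γ(s) − γ(t)‖² − ⟨γ(s) − γ(t), ν(s)⟩` vanishes
to first order in `t − s`, with `F''(s) = (c − 1)κ(s)` and `F'''(s) = −κ'(s)` by the Frenet
equations. As `F ≥ 0`, Taylor's formula on a window of length `h` to the right (left) of `s`
gives `κ'(s) ≤ 3(c − 1)κ(s)/h + O(h)` (resp. `−κ'(s) ≤ …`), as long as `κ` stays bounded on the
window. With `c = 1 + 1/j` and `h = j^{-1/2}` both terms are `O(j^{-1/2})`.

The bounds `|κ'| ≤ C#(κ + 2Θ)²` make `v = 1/(κ + 2Θ)` uniformly Lipschitz. This keeps `κ`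
bounded on the windows, and near the ends of `[0, L]`, where only a one-sided window fits,
`v` moves by at most `C# h`. A continuity argument started at `κ(p) = 1` then keeps `v`
within `O(j^{-1/2})` of `1/(1 + 2Θ)` on all of `[0, L]`.
-/

open Real Set Filter

noncomputable section

/-- The second derivative of a plane curve, componentwise. -/
def d2 (γ : ℝ → ℝ × ℝ) (s : ℝ) : ℝ × ℝ :=
  (deriv (fun u => (deriv γ u).1) s, deriv (fun u => (deriv γ u).2) s)

/-- The outward unit normal `ν(s) = (γ'₂(s), −γ'₁(s))` of a unit-speed plane curve. -/
def nor (γ : ℝ → ℝ × ℝ) (s : ℝ) : ℝ × ℝ := ((deriv γ s).2, -(deriv γ s).1)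

/-- The geodesic curvature `κ(s) = γ'₁(s)·γ''₂(s) − γ'₂(s)·γ''₁(s)` of a unit-speed
plane curve. -/
def curv (γ : ℝ → ℝ × ℝ) (s : ℝ) : ℝ :=
  (deriv γ s).1 * (d2 γ s).2 - (deriv γ s).2 * (d2 γ s).1

/-- Euclidean inner product on `ℝ²`. -/
def dot (v w : ℝ × ℝ) : ℝ := v.1 * w.1 + v.2 * w.2

/-- Squared Euclidean norm on `ℝ²`. -/
def nsq (v : ℝ × ℝ) : ℝ := v.1 ^ 2 + v.2 ^ 2

open Topology

theorem HasDerivAt.fst {f : ℝ → ℝ × ℝ} {f' : ℝ × ℝ} {t : ℝ} (h : HasDerivAt f f' t) :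
    HasDerivAt (fun u => (f u).1) f'.1 t :=
  (ContinuousLinearMap.fst ℝ ℝ ℝ).hasFDerivAt.comp_hasDerivAt t h

theorem HasDerivAt.snd {f : ℝ → ℝ × ℝ} {f' : ℝ × ℝ} {t : ℝ} (h : HasDerivAt f f' t) :
    HasDerivAt (fun u => (f u).2) f'.2 t :=
  (ContinuousLinearMap.snd ℝ ℝ ℝ).hasFDerivAt.comp_hasDerivAt t h

theorem HasDerivAt.eq_of_eqOn_Icc {E : Type*} [NormedAddCommGroup E] [NormedSpace ℝ E]
    {f g : ℝ → E} {f' g' : E} {a b t : ℝ} (hab : a < b) (ht : t ∈ Icc a b)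
    (hfg : EqOn f g (Icc a b)) (hf : HasDerivAt f f' t) (hg : HasDerivAt g g' t) : f' = g' :=
  (uniqueDiffOn_Icc hab t ht).eq_deriv _ hf.hasDerivWithinAt
    (hg.hasDerivWithinAt.congr_of_mem hfg ht)

theorem ContDiff.hasDerivAt_iterate_deriv {E : Type*} [NormedAddCommGroup E] [NormedSpace ℝ E]
    {f : ℝ → E} {n k : ℕ} (hf : ContDiff ℝ n f) (hk : k < n) (t : ℝ) :
    HasDerivAt (deriv^[k] f) (deriv^[k + 1] f t) t := by
  have hd : ContDiff ℝ (n - k : ℕ) (deriv^[k] f) :=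
    ContDiff.iterate_deriv' _ k (by rwa [Nat.sub_add_cancel hk.le])
  rw [Function.iterate_succ_apply']
  exact ((hd.differentiable (by exact_mod_cast (show n - k ≠ 0 by omega))) t).hasDerivAt

theorem abs_sub_le_of_abs_deriv_le {v v' : ℝ → ℝ} {a b C x y : ℝ}
    (hd : ∀ t ∈ Icc a b, HasDerivAt v (v' t) t) (hC : ∀ t ∈ Icc a b, |v' t| ≤ C)
    (hx : x ∈ Icc a b) (hy : y ∈ Icc a b) : |v x - v y| ≤ C * |x - y| := by
  simpa [Real.norm_eq_abs] using (convex_Icc a b).norm_image_sub_le_of_norm_hasDerivWithin_le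
    (fun t ht => (hd t ht).hasDerivWithinAt) (fun t ht => by simpa using hC t ht) hy hx

theorem le_of_hasDerivAt_le {f f' B B' : ℝ → ℝ} {a b : ℝ}
    (hf : ∀ t ∈ Icc a b, HasDerivAt f (f' t) t) (hB : ∀ t, HasDerivAt B (B' t) t)
    (ha : f a ≤ B a) (hle : ∀ t ∈ Icc a b, f' t ≤ B' t) : ∀ t ∈ Icc a b, f t ≤ B t :=
  image_le_of_deriv_right_le_deriv_boundary
    (fun t ht => (hf t ht).continuousAt.continuousWithinAt)
    (fun t ht => (hf t (Ico_subset_Icc_self ht)).hasDerivWithinAt) ha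
    (fun t _ => (hB t).continuousAt.continuousWithinAt)
    (fun t _ => (hB t).hasDerivWithinAt) (fun t ht => hle t (Ico_subset_Icc_self ht))

-- The bound on `f'` is only assumed where `f ≤ R`; comparing `f` with `f a + (ε + δ)(t − a)`
-- for small `δ > 0` shows that `f` never gets there.
theorem le_add_mul_of_deriv_le_of_le {f f' : ℝ → ℝ} {a b ε R : ℝ} (hε : 0 ≤ ε)
    (hd : ∀ t ∈ Icc a b, HasDerivAt f (f' t) t) (hR : f a + ε * (b - a) < R)
    (hf' : ∀ t ∈ Ico a b, f t ≤ R → f' t ≤ ε) :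
    ∀ t ∈ Icc a b, f t ≤ f a + ε * (t - a) := by
  intro t ht
  have hδ : ∀ δ > 0, f a + (ε + δ) * (b - a) < R → f t ≤ f a + (ε + δ) * (t - a) := by
    intro δ hδ hδR
    have hB : ∀ x, HasDerivAt (fun x => f a + (ε + δ) * (x - a)) (ε + δ) x := fun x =>
      ((((hasDerivAt_id x).sub_const a).const_mul (ε + δ)).const_add (f a)).congr_deriv (by simp)
    refine image_le_of_deriv_right_lt_deriv_boundary'
      (fun x hx => (hd x hx).continuousAt.continuousWithinAt)
      (fun x hx => (hd x (Ico_subset_Icc_self hx)).hasDerivWithinAt) (by simp)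
      (fun x _ => (hB x).continuousAt.continuousWithinAt) (fun x _ => (hB x).hasDerivWithinAt)
      ?_ ht
    intro x hx hfx
    have : f x ≤ R := by
      rw [hfx]
      nlinarith [hx.2.le]
    linarith [hf' x hx this]
  have hcont : ∀ y, Tendsto (fun δ => f a + (ε + δ) * (y - a)) (𝓝[>] 0) (𝓝 (f a + ε * (y - a))) :=
    fun y => tendsto_nhdsWithin_of_tendsto_nhds (by
      have : Continuous fun δ : ℝ => f a + (ε + δ) * (y - a) := by fun_prop
      simpa using this.tendsto 0)
  refine ge_of_tendsto (hcont t) ?_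
  filter_upwards [(hcont b).eventually (gt_mem_nhds hR), self_mem_nhdsWithin] with δ hδR hδpos
  exact hδ δ hδpos hδR

def quarticTaylor (c₀ c₁ c₂ c₃ c₄ x : ℝ) : ℝ :=
  c₀ + c₁ * x + c₂ * x ^ 2 / 2 + c₃ * x ^ 3 / 6 + c₄ * x ^ 4 / 24

theorem hasDerivAt_quarticTaylor (c₀ c₁ c₂ c₃ c₄ a t : ℝ) :
    HasDerivAt (fun u => quarticTaylor c₀ c₁ c₂ c₃ c₄ (u - a))
      (quarticTaylor c₁ c₂ c₃ c₄ 0 (t - a)) t := by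
  have hx := (hasDerivAt_id t).sub_const a
  have h := ((((hx.const_mul c₁).const_add c₀).add ((hx.pow 2).const_mul c₂ |>.div_const 2)).add
    ((hx.pow 3).const_mul c₃ |>.div_const 6)).add ((hx.pow 4).const_mul c₄ |>.div_const 24)
  exact h.congr_deriv (by simp only [quarticTaylor, id]; ring)

theorem le_quarticTaylor_sub_left {f f₁ f₂ f₃ f₄ : ℝ → ℝ} {a b M : ℝ}
    (h₀ : ∀ t ∈ Icc a b, HasDerivAt f (f₁ t) t) (h₁ : ∀ t ∈ Icc a b, HasDerivAt f₁ (f₂ t) t)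
    (h₂ : ∀ t ∈ Icc a b, HasDerivAt f₂ (f₃ t) t) (h₃ : ∀ t ∈ Icc a b, HasDerivAt f₃ (f₄ t) t)
    (hM : ∀ t ∈ Icc a b, f₄ t ≤ M) :
    ∀ t ∈ Icc a b, f t ≤ quarticTaylor (f a) (f₁ a) (f₂ a) (f₃ a) M (t - a) := by
  have hP := fun c₀ c₁ c₂ c₃ c₄ t => hasDerivAt_quarticTaylor c₀ c₁ c₂ c₃ c₄ a t
  have hself : ∀ c₀ c₁ c₂ c₃ c₄, quarticTaylor c₀ c₁ c₂ c₃ c₄ (a - a) = c₀ := by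
    intros; simp [quarticTaylor]
  have e₃ := le_of_hasDerivAt_le h₃ (hP (f₃ a) M 0 0 0) (hself _ _ _ _ _).ge
    (fun t ht => by simpa [quarticTaylor] using hM t ht)
  have e₂ := le_of_hasDerivAt_le h₂ (hP (f₂ a) (f₃ a) M 0 0) (hself _ _ _ _ _).ge e₃
  have e₁ := le_of_hasDerivAt_le h₁ (hP (f₁ a) (f₂ a) (f₃ a) M 0) (hself _ _ _ _ _).ge e₂
  exact le_of_hasDerivAt_le h₀ (hP (f a) (f₁ a) (f₂ a) (f₃ a) M) (hself _ _ _ _ _).ge e₁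

theorem le_quarticTaylor_sub_right {f f₁ f₂ f₃ f₄ : ℝ → ℝ} {a b M : ℝ}
    (h₀ : ∀ t ∈ Icc a b, HasDerivAt f (f₁ t) t) (h₁ : ∀ t ∈ Icc a b, HasDerivAt f₁ (f₂ t) t)
    (h₂ : ∀ t ∈ Icc a b, HasDerivAt f₂ (f₃ t) t) (h₃ : ∀ t ∈ Icc a b, HasDerivAt f₃ (f₄ t) t)
    (hM : ∀ t ∈ Icc a b, f₄ t ≤ M) :
    ∀ t ∈ Icc a b, f t ≤ quarticTaylor (f b) (f₁ b) (f₂ b) (f₃ b) M (t - b) := by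
  have hmem : ∀ u ∈ Icc (-b) (-a), -u ∈ Icc a b := fun u hu =>
    ⟨by linarith [hu.2], by linarith [hu.1]⟩
  have hneg {g g' : ℝ → ℝ} (hg : ∀ t ∈ Icc a b, HasDerivAt g (g' t) t) :
      ∀ u ∈ Icc (-b) (-a), HasDerivAt (fun x => g (-x)) (-g' (-u)) u := fun u hu =>
    ((hg (-u) (hmem u hu)).comp u (hasDerivAt_neg u)).congr_deriv (by ring)
  have hneg' {g g' : ℝ → ℝ} (hg : ∀ t ∈ Icc a b, HasDerivAt g (g' t) t) :
      ∀ u ∈ Icc (-b) (-a), HasDerivAt (fun x => -g (-x)) (g' (-u)) u := fun u hu =>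
    (hneg hg u hu).neg.congr_deriv (by ring)
  intro t ht
  have := le_quarticTaylor_sub_left (hneg h₀) (hneg' h₁) (hneg h₂) (hneg' h₃)
    (fun u hu => hM (-u) (hmem u hu)) (-t) ⟨by linarith [ht.2], by linarith [ht.1]⟩
  simp only [neg_neg, quarticTaylor] at this ⊢
  linarith

theorem le_quarticTaylor_uIcc {f f₁ f₂ f₃ f₄ : ℝ → ℝ} {s t M : ℝ}
    (h₀ : ∀ x ∈ uIcc s t, HasDerivAt f (f₁ x) x) (h₁ : ∀ x ∈ uIcc s t, HasDerivAt f₁ (f₂ x) x)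
    (h₂ : ∀ x ∈ uIcc s t, HasDerivAt f₂ (f₃ x) x) (h₃ : ∀ x ∈ uIcc s t, HasDerivAt f₃ (f₄ x) x)
    (hM : ∀ x ∈ uIcc s t, f₄ x ≤ M) :
    f t ≤ quarticTaylor (f s) (f₁ s) (f₂ s) (f₃ s) M (t - s) := by
  rcases le_total s t with hst | hts
  · rw [uIcc_of_le hst] at *
    exact le_quarticTaylor_sub_left h₀ h₁ h₂ h₃ hM t ⟨hst, le_rfl⟩
  · rw [uIcc_of_ge hts] at *
    exact le_quarticTaylor_sub_right h₀ h₁ h₂ h₃ hM t ⟨le_rfl, hts⟩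

def rot (v : ℝ × ℝ) : ℝ × ℝ := (-v.2, v.1)

theorem HasDerivAt.fun_dot {f g : ℝ → ℝ × ℝ} {f' g' : ℝ × ℝ} {t : ℝ} (hf : HasDerivAt f f' t)
    (hg : HasDerivAt g g' t) :
    HasDerivAt (fun u => dot (f u) (g u)) (dot f' (g t) + dot (f t) g') t := by
  have h := (hf.fst.mul hg.fst).add (hf.snd.mul hg.snd)
  exact h.congr_deriv (by unfold dot; ring)

theorem HasDerivAt.fun_rot {f : ℝ → ℝ × ℝ} {f' : ℝ × ℝ} {t : ℝ} (hf : HasDerivAt f f' t) :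
    HasDerivAt (fun u => rot (f u)) (rot f') t :=
  hf.snd.neg.prodMk hf.fst

theorem norm_rot (v : ℝ × ℝ) : ‖rot v‖ = ‖v‖ := by
  simp [rot, Prod.norm_def, max_comm]

-- `‖·‖` is the sup norm on `ℝ × ℝ`.
theorem abs_dot_le (u v : ℝ × ℝ) : |dot u v| ≤ 2 * ‖u‖ * ‖v‖ := by
  have h1 : |u.1 * v.1| ≤ ‖u‖ * ‖v‖ := by
    rw [abs_mul]; exact mul_le_mul (norm_fst_le u) (norm_fst_le v) (abs_nonneg _) (norm_nonneg _)
  have h2 : |u.2 * v.2| ≤ ‖u‖ * ‖v‖ := by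
    rw [abs_mul]; exact mul_le_mul (norm_snd_le u) (norm_snd_le v) (abs_nonneg _) (norm_nonneg _)
  unfold dot
  linarith [abs_add_le (u.1 * v.1) (u.2 * v.2)]

theorem norm_le_one_of_nsq_eq_one {v : ℝ × ℝ} (hv : nsq v = 1) : ‖v‖ ≤ 1 := by
  unfold nsq at hv
  rw [norm_prod_le_iff, Real.norm_eq_abs, Real.norm_eq_abs, abs_le, abs_le]
  refine ⟨⟨?_, ?_⟩, ?_, ?_⟩ <;> nlinarith [sq_nonneg v.1, sq_nonneg v.2]

theorem nsq_eq_dot (v : ℝ × ℝ) : nsq v = dot v v := by simp only [nsq, dot, sq]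

theorem abs_dot_le_of_norm_le {u v : ℝ × ℝ} {U V : ℝ} (hu : ‖u‖ ≤ U) (hv : ‖v‖ ≤ V) :
    |dot u v| ≤ 2 * U * V := by
  have := mul_le_mul hu hv (norm_nonneg _) ((norm_nonneg _).trans hu)
  linarith [abs_dot_le u v]

theorem nor_eq_neg_rot (γ : ℝ → ℝ × ℝ) (s : ℝ) : nor γ s = -rot (deriv γ s) := by
  simp [nor, rot]

theorem norm_smul_rot_le {a A V : ℝ} {v : ℝ × ℝ} (ha : |a| ≤ A) (hv : ‖v‖ ≤ V) :
    ‖a • rot v‖ ≤ A * V := by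
  rw [norm_smul, norm_rot, Real.norm_eq_abs]
  exact mul_le_mul ha hv (norm_nonneg _) ((abs_nonneg _).trans ha)

structure IsUnitSpeedArc (γ : ℝ → ℝ × ℝ) (L : ℝ) : Prop where
  contDiff : ContDiff ℝ 4 γ
  length_pos : 0 < L
  nsq_deriv : ∀ s ∈ Icc 0 L, nsq (deriv γ s) = 1

section Curvature

variable {γ : ℝ → ℝ × ℝ}

theorem d2_eq_iterate_deriv (hγ : ContDiff ℝ 2 γ) : d2 γ = deriv^[2] γ := by
  funext t
  have h := (((hγ.deriv' (n := 1)).differentiable (by norm_num)) t).hasDerivAt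
  exact Prod.ext h.fst.deriv h.snd.deriv

theorem curv_eq_of_contDiff (hγ : ContDiff ℝ 2 γ) :
    curv γ = fun t => (deriv γ t).1 * (deriv^[2] γ t).2 - (deriv γ t).2 * (deriv^[2] γ t).1 := by
  unfold curv
  rw [d2_eq_iterate_deriv hγ]

theorem contDiff_curv (hγ : ContDiff ℝ 4 γ) : ContDiff ℝ 2 (curv γ) := by
  have h1 : ContDiff ℝ 3 (deriv γ) := hγ.deriv' (n := 3)
  have h2 : ContDiff ℝ 2 (deriv (deriv γ)) := h1.deriv' (n := 2)
  rw [curv_eq_of_contDiff (hγ.of_le (by norm_num))]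
  exact ((h1.of_le (by norm_num)).fst.mul h2.snd).sub ((h1.of_le (by norm_num)).snd.mul h2.fst)

end Curvature

namespace IsUnitSpeedArc

variable {γ : ℝ → ℝ × ℝ} {L : ℝ}

theorem hasDerivAt_iterate (hγ : IsUnitSpeedArc γ L) {k : ℕ} (hk : k < 4) (t : ℝ) :
    HasDerivAt (deriv^[k] γ) (deriv^[k + 1] γ t) t :=
  ContDiff.hasDerivAt_iterate_deriv (n := 4) hγ.contDiff hk t

theorem hasDerivAt_curv (hγ : IsUnitSpeedArc γ L) (t : ℝ) :
    HasDerivAt (curv γ) (deriv (curv γ) t) t :=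
  ContDiff.hasDerivAt_iterate_deriv (n := 2) (k := 0) (contDiff_curv hγ.contDiff) (by norm_num) t

theorem hasDerivAt_deriv_curv (hγ : IsUnitSpeedArc γ L) (t : ℝ) :
    HasDerivAt (deriv (curv γ)) (deriv (deriv (curv γ)) t) t :=
  ContDiff.hasDerivAt_iterate_deriv (n := 2) (k := 1) (contDiff_curv hγ.contDiff) (by norm_num) t

theorem dot_deriv_iterate_deriv_two (hγ : IsUnitSpeedArc γ L) {t : ℝ} (ht : t ∈ Icc 0 L) :
    dot (deriv γ t) (deriv^[2] γ t) = 0 := by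
  have h1 : HasDerivAt (deriv γ) (deriv^[2] γ t) t := hγ.hasDerivAt_iterate (k := 1) (by norm_num) t
  have := (h1.fun_dot h1).eq_of_eqOn_Icc hγ.length_pos ht
    (fun u hu => by simpa [nsq, dot, sq] using hγ.nsq_deriv u hu) (hasDerivAt_const t 1)
  simp only [dot] at this ⊢
  linarith

theorem iterate_deriv_two_eq (hγ : IsUnitSpeedArc γ L) {t : ℝ} (ht : t ∈ Icc 0 L) :
    deriv^[2] γ t = curv γ t • rot (deriv γ t) := by
  have hd := hγ.dot_deriv_iterate_deriv_two ht
  have hu := hγ.nsq_deriv t ht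
  have hc := congrFun (curv_eq_of_contDiff (hγ.contDiff.of_le (by norm_num))) t
  simp only [dot, nsq] at hd hu
  ext
  · simp only [rot, Prod.smul_mk, smul_eq_mul, hc]
    linear_combination (deriv γ t).1 * hd - (deriv^[2] γ t).1 * hu
  · simp only [rot, Prod.smul_mk, smul_eq_mul, hc]
    linear_combination (deriv γ t).2 * hd - (deriv^[2] γ t).2 * hu

theorem iterate_deriv_three_eq (hγ : IsUnitSpeedArc γ L) {t : ℝ} (ht : t ∈ Icc 0 L) :
    deriv^[3] γ t = deriv (curv γ) t • rot (deriv γ t) + curv γ t • rot (deriv^[2] γ t) := by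
  have h1 : HasDerivAt (deriv γ) (deriv^[2] γ t) t := hγ.hasDerivAt_iterate (k := 1) (by norm_num) t
  have h2 : HasDerivAt (deriv^[2] γ) (deriv^[3] γ t) t :=
    hγ.hasDerivAt_iterate (k := 2) (by norm_num) t
  rw [add_comm]
  exact h2.eq_of_eqOn_Icc hγ.length_pos ht (fun u hu => hγ.iterate_deriv_two_eq hu)
    ((hγ.hasDerivAt_curv t).smul h1.fun_rot)

theorem iterate_deriv_four_eq (hγ : IsUnitSpeedArc γ L) {t : ℝ} (ht : t ∈ Icc 0 L) :
    deriv^[4] γ t = deriv (deriv (curv γ)) t • rot (deriv γ t)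
      + (2 * deriv (curv γ) t) • rot (deriv^[2] γ t) + curv γ t • rot (deriv^[3] γ t) := by
  have h1 : HasDerivAt (deriv γ) (deriv^[2] γ t) t := hγ.hasDerivAt_iterate (k := 1) (by norm_num) t
  have h2 : HasDerivAt (deriv^[2] γ) (deriv^[3] γ t) t :=
    hγ.hasDerivAt_iterate (k := 2) (by norm_num) t
  have h3 : HasDerivAt (deriv^[3] γ) (deriv^[4] γ t) t :=
    hγ.hasDerivAt_iterate (k := 3) (by norm_num) t
  rw [h3.eq_of_eqOn_Icc hγ.length_pos ht (fun u hu => hγ.iterate_deriv_three_eq hu)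
    (((hγ.hasDerivAt_deriv_curv t).smul h1.fun_rot).add ((hγ.hasDerivAt_curv t).smul h2.fun_rot))]
  module

theorem norm_iterate_deriv_le (hγ : IsUnitSpeedArc γ L) {t Q A B : ℝ} (ht : t ∈ Icc 0 L)
    (hκ : |curv γ t| ≤ Q) (hκ' : |deriv (curv γ) t| ≤ A)
    (hκ'' : |deriv (deriv (curv γ)) t| ≤ B) :
    ‖deriv^[2] γ t‖ ≤ Q ∧ ‖deriv^[3] γ t‖ ≤ A + Q ^ 2
      ∧ ‖deriv^[4] γ t‖ ≤ B + 2 * A * Q + Q * (A + Q ^ 2) := by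
  have h1 := norm_le_one_of_nsq_eq_one (hγ.nsq_deriv t ht)
  have h2 : ‖deriv^[2] γ t‖ ≤ Q := by
    simpa [hγ.iterate_deriv_two_eq ht] using norm_smul_rot_le hκ h1
  have h3 : ‖deriv^[3] γ t‖ ≤ A + Q ^ 2 := by
    rw [hγ.iterate_deriv_three_eq ht]
    refine (norm_add_le _ _).trans ?_
    linarith [norm_smul_rot_le hκ' h1, norm_smul_rot_le hκ h2]
  refine ⟨h2, h3, ?_⟩
  have h2κ' : |2 * deriv (curv γ) t| ≤ 2 * A := by rw [abs_mul, abs_two]; linarith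
  rw [hγ.iterate_deriv_four_eq ht]
  refine (norm_add₃_le).trans ?_
  linarith [norm_smul_rot_le hκ'' h1, norm_smul_rot_le h2κ' h2, norm_smul_rot_le hκ h3]

theorem norm_sub_le (hγ : IsUnitSpeedArc γ L) {x y : ℝ}
    (hx : x ∈ Icc 0 L) (hy : y ∈ Icc 0 L) : ‖γ x - γ y‖ ≤ |x - y| := by
  have := (convex_Icc 0 L).norm_image_sub_le_of_norm_hasDerivWithin_le (f := γ) (C := 1)
    (fun u _ => (hγ.hasDerivAt_iterate (k := 0) (by norm_num) u).hasDerivWithinAt)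
    (fun u hu => norm_le_one_of_nsq_eq_one (hγ.nsq_deriv u hu)) hy hx
  simpa [Real.norm_eq_abs] using this

end IsUnitSpeedArc

structure IsControlledArc (γ : ℝ → ℝ × ℝ) (L C Θ : ℝ) : Prop extends IsUnitSpeedArc γ L where
  curv_pos : ∀ s ∈ Icc 0 L, 0 < curv γ s
  abs_deriv_curv_le : ∀ s ∈ Icc 0 L, |deriv (curv γ) s| ≤ C * (curv γ s + 2 * Θ) ^ 2
  abs_deriv_deriv_curv_le : ∀ s ∈ Icc 0 L, |deriv (deriv (curv γ)) s| ≤ C * (curv γ s + 2 * Θ) ^ 3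

namespace IsControlledArc

variable {γ : ℝ → ℝ × ℝ} {L C Θ : ℝ}

theorem norm_iterate_deriv_le (hγ : IsControlledArc γ L C Θ) (hC : 0 ≤ C) (hΘ : 0 ≤ Θ)
    {t Q : ℝ} (ht : t ∈ Icc 0 L) (hQ : curv γ t + 2 * Θ ≤ Q) :
    |curv γ t| ≤ Q ∧ ‖deriv^[2] γ t‖ ≤ Q ∧ ‖deriv^[3] γ t‖ ≤ (C + 1) * Q ^ 2
      ∧ ‖deriv^[4] γ t‖ ≤ (4 * C + 1) * Q ^ 3 := by
  have hκ := hγ.curv_pos t ht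
  have hκQ : |curv γ t| ≤ Q := by rw [abs_of_pos hκ]; linarith
  have hu : 0 ≤ curv γ t + 2 * Θ := by linarith
  have hκ' : |deriv (curv γ) t| ≤ C * Q ^ 2 :=
    (hγ.abs_deriv_curv_le t ht).trans (by gcongr)
  have hκ'' : |deriv (deriv (curv γ)) t| ≤ C * Q ^ 3 :=
    (hγ.abs_deriv_deriv_curv_le t ht).trans (by gcongr)
  obtain ⟨h2, h3, h4⟩ := hγ.toIsUnitSpeedArc.norm_iterate_deriv_le ht hκQ hκ' hκ''
  exact ⟨hκQ, h2, by linarith, by linarith⟩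

end IsControlledArc

def inscribedGap (γ : ℝ → ℝ × ℝ) (c s t : ℝ) : ℝ :=
  c * curv γ s / 2 * nsq (γ s - γ t) - dot (γ s - γ t) (nor γ s)

-- `inscribedGapₖ γ c s` is the `k`-th derivative of `inscribedGap γ c s`.
def inscribedGap₁ (γ : ℝ → ℝ × ℝ) (c s t : ℝ) : ℝ :=
  -(c * curv γ s) * dot (γ s - γ t) (deriv γ t) + dot (deriv γ t) (nor γ s)

def inscribedGap₂ (γ : ℝ → ℝ × ℝ) (c s t : ℝ) : ℝ :=
  c * curv γ s * (dot (deriv γ t) (deriv γ t) - dot (γ s - γ t) (deriv^[2] γ t))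
    + dot (deriv^[2] γ t) (nor γ s)

def inscribedGap₃ (γ : ℝ → ℝ × ℝ) (c s t : ℝ) : ℝ :=
  c * curv γ s * (3 * dot (deriv γ t) (deriv^[2] γ t) - dot (γ s - γ t) (deriv^[3] γ t))
    + dot (deriv^[3] γ t) (nor γ s)

def inscribedGap₄ (γ : ℝ → ℝ × ℝ) (c s t : ℝ) : ℝ :=
  c * curv γ s * (3 * dot (deriv^[2] γ t) (deriv^[2] γ t) + 4 * dot (deriv γ t) (deriv^[3] γ t)
      - dot (γ s - γ t) (deriv^[4] γ t))
    + dot (deriv^[4] γ t) (nor γ s)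

section InscribedGap

variable {γ : ℝ → ℝ × ℝ} {c s : ℝ}

theorem hasDerivAt_inscribedGap (hγ : ContDiff ℝ 4 γ) (t : ℝ) :
    HasDerivAt (inscribedGap γ c s) (inscribedGap₁ γ c s t) t := by
  have hE : HasDerivAt (fun u => γ s - γ u) (-deriv γ t) t :=
    (hγ.hasDerivAt_iterate_deriv (n := 4) (k := 0) (by norm_num) t).const_sub _
  have h := ((hE.fun_dot hE).const_mul (c * curv γ s / 2)).sub
    (hE.fun_dot (hasDerivAt_const t (nor γ s)))
  simp only [← nsq_eq_dot] at h
  exact h.congr_deriv (by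
    simp only [inscribedGap₁, dot, Prod.fst_neg, Prod.snd_neg, Prod.fst_zero, Prod.snd_zero]
    ring)

theorem hasDerivAt_inscribedGap₁ (hγ : ContDiff ℝ 4 γ) (t : ℝ) :
    HasDerivAt (inscribedGap₁ γ c s) (inscribedGap₂ γ c s t) t := by
  have hE : HasDerivAt (fun u => γ s - γ u) (-deriv γ t) t :=
    (hγ.hasDerivAt_iterate_deriv (n := 4) (k := 0) (by norm_num) t).const_sub _
  have h₁ : HasDerivAt (deriv γ) (deriv^[2] γ t) t :=
    hγ.hasDerivAt_iterate_deriv (n := 4) (k := 1) (by norm_num) t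
  have h := ((hE.fun_dot h₁).const_mul (-(c * curv γ s))).add
    (h₁.fun_dot (hasDerivAt_const t (nor γ s)))
  exact h.congr_deriv (by
    simp only [inscribedGap₂, dot, Prod.fst_neg, Prod.snd_neg, Prod.fst_zero, Prod.snd_zero]
    ring)

theorem hasDerivAt_inscribedGap₂ (hγ : ContDiff ℝ 4 γ) (t : ℝ) :
    HasDerivAt (inscribedGap₂ γ c s) (inscribedGap₃ γ c s t) t := by
  have hE : HasDerivAt (fun u => γ s - γ u) (-deriv γ t) t :=
    (hγ.hasDerivAt_iterate_deriv (n := 4) (k := 0) (by norm_num) t).const_sub _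
  have h₁ : HasDerivAt (deriv γ) (deriv^[2] γ t) t :=
    hγ.hasDerivAt_iterate_deriv (n := 4) (k := 1) (by norm_num) t
  have h₂ : HasDerivAt (deriv^[2] γ) (deriv^[3] γ t) t :=
    hγ.hasDerivAt_iterate_deriv (n := 4) (k := 2) (by norm_num) t
  have h := (((h₁.fun_dot h₁).sub (hE.fun_dot h₂)).const_mul (c * curv γ s)).add
    (h₂.fun_dot (hasDerivAt_const t (nor γ s)))
  exact h.congr_deriv (by
    simp only [inscribedGap₃, dot, Prod.fst_neg, Prod.snd_neg, Prod.fst_zero, Prod.snd_zero]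
    ring)

theorem hasDerivAt_inscribedGap₃ (hγ : ContDiff ℝ 4 γ) (t : ℝ) :
    HasDerivAt (inscribedGap₃ γ c s) (inscribedGap₄ γ c s t) t := by
  have hE : HasDerivAt (fun u => γ s - γ u) (-deriv γ t) t :=
    (hγ.hasDerivAt_iterate_deriv (n := 4) (k := 0) (by norm_num) t).const_sub _
  have h₁ : HasDerivAt (deriv γ) (deriv^[2] γ t) t :=
    hγ.hasDerivAt_iterate_deriv (n := 4) (k := 1) (by norm_num) t
  have h₂ : HasDerivAt (deriv^[2] γ) (deriv^[3] γ t) t :=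
    hγ.hasDerivAt_iterate_deriv (n := 4) (k := 2) (by norm_num) t
  have h₃ : HasDerivAt (deriv^[3] γ) (deriv^[4] γ t) t :=
    hγ.hasDerivAt_iterate_deriv (n := 4) (k := 3) (by norm_num) t
  have h := ((((h₁.fun_dot h₂).const_mul 3).sub (hE.fun_dot h₃)).const_mul (c * curv γ s)).add
    (h₃.fun_dot (hasDerivAt_const t (nor γ s)))
  exact h.congr_deriv (by
    simp only [inscribedGap₄, dot, Prod.fst_neg, Prod.snd_neg, Prod.fst_zero, Prod.snd_zero]
    ring)

theorem inscribedGap_self : inscribedGap γ c s s = 0 := by simp [inscribedGap, nsq, dot]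

theorem inscribedGap₁_self : inscribedGap₁ γ c s s = 0 := by
  simp only [inscribedGap₁, sub_self, dot, nor, Prod.fst_zero, Prod.snd_zero]; ring

theorem inscribedGap₂_self {L : ℝ} (hγ : IsUnitSpeedArc γ L) (hs : s ∈ Icc 0 L) :
    inscribedGap₂ γ c s s = (c - 1) * curv γ s := by
  have hu := hγ.nsq_deriv s hs
  simp only [nsq] at hu
  simp only [inscribedGap₂, sub_self, hγ.iterate_deriv_two_eq hs, dot, nor, rot, Prod.fst_zero,
    Prod.snd_zero, Prod.smul_mk, smul_eq_mul]
  linear_combination (c - 1) * curv γ s * hu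

theorem inscribedGap₃_self {L : ℝ} (hγ : IsUnitSpeedArc γ L) (hs : s ∈ Icc 0 L) :
    inscribedGap₃ γ c s s = -deriv (curv γ) s := by
  have hu := hγ.nsq_deriv s hs
  simp only [nsq] at hu
  simp only [inscribedGap₃, sub_self, hγ.iterate_deriv_three_eq hs, hγ.iterate_deriv_two_eq hs,
    dot, nor, rot, Prod.fst_zero, Prod.snd_zero, Prod.smul_mk, smul_eq_mul, Prod.mk_add_mk]
  linear_combination (-deriv (curv γ) s) * hu

theorem abs_inscribedGap₄_le {t Q A B : ℝ} (hκ : |c * curv γ s| ≤ 2 * Q)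
    (hE : ‖γ s - γ t‖ ≤ 1) (hν : ‖nor γ s‖ ≤ 1) (h₁ : ‖deriv γ t‖ ≤ 1)
    (h₂ : ‖deriv^[2] γ t‖ ≤ Q) (h₃ : ‖deriv^[3] γ t‖ ≤ A) (h₄ : ‖deriv^[4] γ t‖ ≤ B) :
    |inscribedGap₄ γ c s t| ≤ 2 * Q * (6 * Q ^ 2 + 8 * A + 2 * B) + 2 * B := by
  have hX : |3 * dot (deriv^[2] γ t) (deriv^[2] γ t) + 4 * dot (deriv γ t) (deriv^[3] γ t)
      - dot (γ s - γ t) (deriv^[4] γ t)| ≤ 6 * Q ^ 2 + 8 * A + 2 * B := by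
    have e₂ := abs_dot_le_of_norm_le h₂ h₂
    have e₃ := abs_dot_le_of_norm_le h₁ h₃
    have e₄ := abs_dot_le_of_norm_le hE h₄
    rw [abs_le] at e₂ e₃ e₄ ⊢
    constructor <;> linarith [e₂.1, e₂.2, e₃.1, e₃.2, e₄.1, e₄.2]
  have hY := abs_dot_le_of_norm_le h₄ hν
  unfold inscribedGap₄
  refine (abs_add_le _ _).trans ?_
  rw [abs_mul]
  have := mul_le_mul hκ hX (abs_nonneg _) ((abs_nonneg _).trans hκ)
  linarith

end InscribedGap

def inscribedGap₄Bound (C Q : ℝ) : ℝ :=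
  2 * Q * (6 * Q ^ 2 + 8 * ((C + 1) * Q ^ 2) + 2 * ((4 * C + 1) * Q ^ 3))
    + 2 * ((4 * C + 1) * Q ^ 3)

theorem inscribedGap₄Bound_nonneg {C Q : ℝ} (hC : 0 ≤ C) (hQ : 0 ≤ Q) :
    0 ≤ inscribedGap₄Bound C Q := by
  unfold inscribedGap₄Bound; positivity

namespace IsControlledArc

variable {γ : ℝ → ℝ × ℝ} {L C Θ : ℝ}

theorem inscribedGap_le (hγ : IsControlledArc γ L C Θ) (hC : 0 ≤ C) (hΘ : 0 ≤ Θ)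
    {c s t Q : ℝ} (hc0 : 0 ≤ c) (hc2 : c ≤ 2) (hst : |t - s| ≤ 1)
    (hwin : ∀ x ∈ uIcc s t, x ∈ Icc 0 L ∧ curv γ x + 2 * Θ ≤ Q) :
    inscribedGap γ c s t
      ≤ quarticTaylor 0 0 ((c - 1) * curv γ s) (-deriv (curv γ) s) (inscribedGap₄Bound C Q)
        (t - s) := by
  obtain ⟨hs, hsQ⟩ := hwin s left_mem_uIcc
  have hκs : |c * curv γ s| ≤ 2 * Q := by
    rw [abs_mul, abs_of_nonneg hc0]
    exact mul_le_mul hc2 (hγ.norm_iterate_deriv_le hC hΘ hs hsQ).1 (abs_nonneg _) zero_le_two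
  have hν : ‖nor γ s‖ ≤ 1 := by
    rw [nor_eq_neg_rot, norm_neg, norm_rot]
    exact norm_le_one_of_nsq_eq_one (hγ.nsq_deriv s hs)
  have hM : ∀ x ∈ uIcc s t, inscribedGap₄ γ c s x ≤ inscribedGap₄Bound C Q := by
    intro x hx
    obtain ⟨hxL, hxQ⟩ := hwin x hx
    obtain ⟨-, h₂, h₃, h₄⟩ := hγ.norm_iterate_deriv_le hC hΘ hxL hxQ
    have hE : ‖γ s - γ x‖ ≤ 1 := by
      refine (hγ.norm_sub_le hs hxL).trans ?_
      rw [abs_sub_comm]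
      exact (abs_sub_left_of_mem_uIcc hx).trans hst
    exact (le_abs_self _).trans ((abs_inscribedGap₄_le hκs hE hν
      (norm_le_one_of_nsq_eq_one (hγ.nsq_deriv x hxL)) h₂ h₃ h₄).trans_eq
        (by unfold inscribedGap₄Bound; ring))
  have := le_quarticTaylor_uIcc
    (fun x _ => hasDerivAt_inscribedGap hγ.contDiff x)
    (fun x _ => hasDerivAt_inscribedGap₁ hγ.contDiff x)
    (fun x _ => hasDerivAt_inscribedGap₂ hγ.contDiff x)
    (fun x _ => hasDerivAt_inscribedGap₃ hγ.contDiff x) hM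
  rwa [inscribedGap_self, inscribedGap₁_self, inscribedGap₂_self hγ.toIsUnitSpeedArc hs,
    inscribedGap₃_self hγ.toIsUnitSpeedArc hs] at this

theorem curv_mul_le (hγ : IsControlledArc γ L C Θ) (hΘ : 0 ≤ Θ) {c s h Q : ℝ} (hs : s ∈ Icc 0 L)
    (hQ : curv γ s + 2 * Θ ≤ Q) (hch : c ≤ 1 + h ^ 2) :
    (c - 1) * curv γ s ≤ h ^ 2 * Q :=
  mul_le_mul (by linarith) (by linarith) (hγ.curv_pos s hs).le (sq_nonneg h)

theorem deriv_curv_le (hγ : IsControlledArc γ L C Θ) (hC : 0 ≤ C) (hΘ : 0 ≤ Θ)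
    {c s h Q : ℝ} (hc1 : 1 ≤ c) (hch : c ≤ 1 + h ^ 2) (hh : 0 < h) (hh1 : h ≤ 1)
    (hwin : ∀ x ∈ Icc s (s + h), x ∈ Icc 0 L ∧ curv γ x + 2 * Θ ≤ Q)
    (hin : 0 ≤ inscribedGap γ c s (s + h)) :
    deriv (curv γ) s ≤ (3 * Q + inscribedGap₄Bound C Q / 4) * h := by
  obtain ⟨hs, hsQ⟩ := hwin s ⟨le_rfl, by linarith⟩
  have hT := hγ.inscribedGap_le (c := c) (s := s) (t := s + h) hC hΘ (by linarith) (by nlinarith)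
    (by simpa [abs_of_pos hh]) (by rwa [uIcc_of_le (by linarith)])
  have hA := mul_le_mul_of_nonneg_right (hγ.curv_mul_le hΘ hs hsQ hch) (sq_nonneg h)
  simp only [quarticTaylor, add_sub_cancel_left] at hT
  have hh3 : 0 < h ^ 3 := by positivity
  refine le_of_mul_le_mul_right ?_ hh3
  linarith

theorem neg_deriv_curv_le (hγ : IsControlledArc γ L C Θ) (hC : 0 ≤ C) (hΘ : 0 ≤ Θ)
    {c s h Q : ℝ} (hc1 : 1 ≤ c) (hch : c ≤ 1 + h ^ 2) (hh : 0 < h) (hh1 : h ≤ 1)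
    (hwin : ∀ x ∈ Icc (s - h) s, x ∈ Icc 0 L ∧ curv γ x + 2 * Θ ≤ Q)
    (hin : 0 ≤ inscribedGap γ c s (s - h)) :
    -deriv (curv γ) s ≤ (3 * Q + inscribedGap₄Bound C Q / 4) * h := by
  obtain ⟨hs, hsQ⟩ := hwin s ⟨by linarith, le_rfl⟩
  have hT := hγ.inscribedGap_le (c := c) (s := s) (t := s - h) hC hΘ (by linarith) (by nlinarith)
    (by simpa [abs_of_pos hh]) (by rwa [uIcc_of_ge (by linarith)])
  have hA := mul_le_mul_of_nonneg_right (hγ.curv_mul_le hΘ hs hsQ hch) (sq_nonneg h)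
  simp only [quarticTaylor, sub_sub_cancel_left] at hT
  have hh3 : 0 < h ^ 3 := by positivity
  refine le_of_mul_le_mul_right ?_ hh3
  linarith

theorem hasDerivAt_inv_curv_add (hγ : IsControlledArc γ L C Θ) (hΘ : 0 ≤ Θ) {t : ℝ}
    (ht : t ∈ Icc 0 L) :
    HasDerivAt (fun t => (curv γ t + 2 * Θ)⁻¹)
      (-deriv (curv γ) t / (curv γ t + 2 * Θ) ^ 2) t :=
  ((hγ.hasDerivAt_curv t).add_const (2 * Θ)).inv (by linarith [hγ.curv_pos t ht])

theorem abs_deriv_inv_curv_add_le (hγ : IsControlledArc γ L C Θ) (hΘ : 0 ≤ Θ) {t : ℝ}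
    (ht : t ∈ Icc 0 L) : |-deriv (curv γ) t / (curv γ t + 2 * Θ) ^ 2| ≤ C := by
  have hpos : 0 < (curv γ t + 2 * Θ) ^ 2 := by nlinarith [hγ.curv_pos t ht]
  rw [abs_div, abs_neg, abs_of_pos hpos, div_le_iff₀ hpos]
  exact hγ.abs_deriv_curv_le t ht

theorem curv_add_le_of_two_div_le_inv (hγ : IsControlledArc γ L C Θ) (hΘ : 0 ≤ Θ)
    {t x h Q : ℝ} (hQ : 0 < Q) (hCh : C * h ≤ 1 / Q) (ht : t ∈ Icc 0 L) (hx : x ∈ Icc 0 L)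
    (hxt : |x - t| ≤ h) (hvt : 2 / Q ≤ (curv γ t + 2 * Θ)⁻¹) : curv γ x + 2 * Θ ≤ Q := by
  have hlip := abs_sub_le_of_abs_deriv_le (fun u hu => hγ.hasDerivAt_inv_curv_add hΘ hu)
    (fun u hu => hγ.abs_deriv_inv_curv_add_le hΘ hu) hx ht
  have hC := (abs_nonneg _).trans (hγ.abs_deriv_inv_curv_add_le hΘ ht)
  have h1 : 1 / Q ≤ 1 / (curv γ x + 2 * Θ) := by
    rw [one_div (curv γ x + 2 * Θ)]
    have : 2 / Q = 1 / Q + 1 / Q := by ring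
    linarith [(abs_le.mp hlip).1, mul_le_mul_of_nonneg_left hxt hC]
  exact le_of_one_div_le_one_div hQ h1

theorem neg_le_deriv_inv_curv_add (hγ : IsControlledArc γ L C Θ) (hC : 0 ≤ C) (hΘ : 0 < Θ)
    {c h t Q : ℝ} (hc1 : 1 ≤ c) (hch : c ≤ 1 + h ^ 2) (hh : 0 < h) (hh1 : h ≤ 1) (hQ : 0 < Q)
    (hCh : C * h ≤ 1 / Q) (ht : t ∈ Icc 0 L) (hth : t + h ≤ L)
    (hvt : 2 / Q ≤ (curv γ t + 2 * Θ)⁻¹) (hin : 0 ≤ inscribedGap γ c t (t + h)) :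
    -((3 * Q + inscribedGap₄Bound C Q / 4) * h / (4 * Θ ^ 2))
      ≤ -deriv (curv γ) t / (curv γ t + 2 * Θ) ^ 2 := by
  have hsub : ∀ x ∈ Icc t (t + h), x ∈ Icc 0 L := fun x hx => ⟨ht.1.trans hx.1, hx.2.trans hth⟩
  have hκ' := hγ.deriv_curv_le hC hΘ.le hc1 hch hh hh1 (fun x hx => ⟨hsub x hx,
    hγ.curv_add_le_of_two_div_le_inv hΘ.le hQ hCh ht (hsub x hx)
      (abs_le.mpr ⟨by linarith [hx.1], by linarith [hx.2]⟩) hvt⟩) hin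
  have hM := inscribedGap₄Bound_nonneg hC hQ.le
  have hΘκ : 4 * Θ ^ 2 ≤ (curv γ t + 2 * Θ) ^ 2 := by nlinarith [hγ.curv_pos t ht]
  rw [neg_div]
  refine neg_le_neg ((div_le_div_of_nonneg_right hκ' (by positivity)).trans ?_)
  exact div_le_div_of_nonneg_left (by positivity) (by positivity) hΘκ

theorem deriv_inv_curv_add_le (hγ : IsControlledArc γ L C Θ) (hC : 0 ≤ C) (hΘ : 0 < Θ)
    {c h t Q : ℝ} (hc1 : 1 ≤ c) (hch : c ≤ 1 + h ^ 2) (hh : 0 < h) (hh1 : h ≤ 1) (hQ : 0 < Q)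
    (hCh : C * h ≤ 1 / Q) (ht : t ∈ Icc 0 L) (hth : h ≤ t)
    (hvt : 2 / Q ≤ (curv γ t + 2 * Θ)⁻¹) (hin : 0 ≤ inscribedGap γ c t (t - h)) :
    -deriv (curv γ) t / (curv γ t + 2 * Θ) ^ 2
      ≤ (3 * Q + inscribedGap₄Bound C Q / 4) * h / (4 * Θ ^ 2) := by
  have hsub : ∀ x ∈ Icc (t - h) t, x ∈ Icc 0 L := fun x hx =>
    ⟨by linarith [hx.1], hx.2.trans ht.2⟩
  have hκ' := hγ.neg_deriv_curv_le hC hΘ.le hc1 hch hh hh1 (fun x hx => ⟨hsub x hx,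
    hγ.curv_add_le_of_two_div_le_inv hΘ.le hQ hCh ht (hsub x hx)
      (abs_le.mpr ⟨by linarith [hx.1], by linarith [hx.2]⟩) hvt⟩) hin
  have hM := inscribedGap₄Bound_nonneg hC hQ.le
  have hΘκ : 4 * Θ ^ 2 ≤ (curv γ t + 2 * Θ) ^ 2 := by nlinarith [hγ.curv_pos t ht]
  refine (div_le_div_of_nonneg_right hκ' (by positivity)).trans ?_
  exact div_le_div_of_nonneg_left (by positivity) (by positivity) hΘκ

end IsControlledArc

section Propagation

variable {v v' : ℝ → ℝ} {L p h ε C K : ℝ}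

-- `v'` is controlled only where `v ≥ K` and a window of length `h` fits on the relevant side;
-- the slack `hK` keeps `v ≥ K`, and the ends of length `≤ h` are crossed using `|v'| ≤ C`.
theorem sub_le_of_hasDerivAt_right (hp : p ∈ Icc 0 L) (hh : 0 ≤ h) (hε : 0 ≤ ε)
    (hd : ∀ t ∈ Icc 0 L, HasDerivAt v (v' t) t) (hC : ∀ t ∈ Icc 0 L, |v' t| ≤ C)
    (hup : ∀ t ∈ Icc 0 L, t + h ≤ L → K ≤ v t → -ε ≤ v' t)
    (hK : K < v p - (ε * L + C * h)) :
    ∀ s ∈ Icc p L, v p - (ε * L + C * h) ≤ v s := by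
  have hC0 : 0 ≤ C := (abs_nonneg _).trans (hC p hp)
  set b := max p (L - h)
  have hbL : b ≤ L := max_le hp.2 (by linarith)
  have hsub : Icc p L ⊆ Icc 0 L := Icc_subset_Icc_left hp.1
  have hεL : ∀ s ∈ Icc p L, ε * (s - p) ≤ ε * L := fun s hs =>
    mul_le_mul_of_nonneg_left (by linarith [hp.1, hs.2]) hε
  have hbar := le_add_mul_of_deriv_le_of_le (f := fun t => -v t) (f' := fun t => -v' t)
    (b := b) (R := -K) hε (fun t ht => (hd t (hsub ⟨ht.1, ht.2.trans hbL⟩)).neg)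
    (by linarith [hεL b ⟨le_max_left _ _, hbL⟩, mul_nonneg hC0 hh])
    (fun t ht hvt => by
      have htb : t + h ≤ L := by
        rcases lt_max_iff.mp ht.2 with h' | h' <;> linarith [ht.1]
      linarith [hup t (hsub ⟨ht.1, ht.2.le.trans hbL⟩) htb (by linarith)])
  intro s hs
  rcases le_total s b with hsb | hbs
  · linarith [hbar s ⟨hs.1, hsb⟩, hεL s hs, mul_nonneg hC0 hh]
  · have h1 := hbar b ⟨le_max_left _ _, le_rfl⟩
    have h2 := abs_sub_le_of_abs_deriv_le hd hC (hsub hs) (hsub ⟨le_max_left _ _, hbL⟩)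
    rw [abs_of_nonneg (sub_nonneg.mpr hbs)] at h2
    have h3 : C * (s - b) ≤ C * h :=
      mul_le_mul_of_nonneg_left (by linarith [le_max_right p (L - h), hs.2]) hC0
    linarith [(abs_le.mp h2).1, hεL b ⟨le_max_left _ _, hbL⟩]

theorem abs_sub_le_of_hasDerivAt_right (hp : p ∈ Icc 0 L) (hh : 0 ≤ h) (hε : 0 ≤ ε)
    (hd : ∀ t ∈ Icc 0 L, HasDerivAt v (v' t) t) (hC : ∀ t ∈ Icc 0 L, |v' t| ≤ C)
    (hup : ∀ t ∈ Icc 0 L, t + h ≤ L → K ≤ v t → -ε ≤ v' t)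
    (hdown : ∀ t ∈ Icc 0 L, h ≤ t → K ≤ v t → v' t ≤ ε)
    (hK : K < v p - (ε * L + C * h)) :
    ∀ s ∈ Icc p L, |v s - v p| ≤ ε * L + C * h := by
  have hC0 : 0 ≤ C := (abs_nonneg _).trans (hC p hp)
  have hlow := sub_le_of_hasDerivAt_right hp hh hε hd hC hup hK
  have hsub : Icc p L ⊆ Icc 0 L := Icc_subset_Icc_left hp.1
  set a := max p h
  have hpa : p ≤ a := le_max_left _ _
  have hap : ∀ x ∈ Icc p L, x ≤ a → |v x - v p| ≤ C * h := fun x hx hxa => by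
    refine (abs_sub_le_of_abs_deriv_le hd hC (hsub hx) hp).trans
      (mul_le_mul_of_nonneg_left ?_ hC0)
    rw [abs_of_nonneg (sub_nonneg.mpr hx.1)]
    rcases le_max_iff.mp hxa with h' | h' <;> linarith [hp.1]
  have hup' : ∀ s ∈ Icc p L, v s ≤ v p + (ε * L + C * h) := by
    intro s hs
    have hεL : ε * (s - a) ≤ ε * L := mul_le_mul_of_nonneg_left (by linarith [hp.1, hs.2]) hε
    have hεL0 : 0 ≤ ε * L := mul_nonneg hε (hp.1.trans hp.2)
    rcases le_total s a with hsa | has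
    · linarith [(abs_le.mp (hap s hs hsa)).2]
    have hbar := le_add_mul_of_deriv_le_of_le (f := v) (a := a) (b := s)
      (R := v a + ε * (s - a) + 1) hε (fun t ht => hd t (hsub ⟨hpa.trans ht.1, ht.2.trans hs.2⟩))
      (by linarith)
      (fun t ht _ => hdown t (hsub ⟨hpa.trans ht.1, ht.2.le.trans hs.2⟩)
        ((le_max_right p h).trans ht.1)
        (by linarith [hlow t ⟨hpa.trans ht.1, ht.2.le.trans hs.2⟩]))
    linarith [hbar s ⟨has, le_rfl⟩, (abs_le.mp (hap a ⟨hpa, has.trans hs.2⟩ le_rfl)).2]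
  exact fun s hs => abs_le.mpr ⟨by linarith [hlow s hs], by linarith [hup' s hs]⟩

theorem abs_sub_le_of_hasDerivAt (hp : p ∈ Icc 0 L) (hh : 0 ≤ h) (hε : 0 ≤ ε)
    (hd : ∀ t ∈ Icc 0 L, HasDerivAt v (v' t) t) (hC : ∀ t ∈ Icc 0 L, |v' t| ≤ C)
    (hup : ∀ t ∈ Icc 0 L, t + h ≤ L → K ≤ v t → -ε ≤ v' t)
    (hdown : ∀ t ∈ Icc 0 L, h ≤ t → K ≤ v t → v' t ≤ ε)
    (hK : K < v p - (ε * L + C * h)) :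
    ∀ s ∈ Icc 0 L, |v s - v p| ≤ ε * L + C * h := by
  intro s hs
  rcases le_total p s with hps | hsp
  · exact abs_sub_le_of_hasDerivAt_right hp hh hε hd hC hup hdown hK s ⟨hps, hs.2⟩
  have hmem : ∀ t ∈ Icc 0 L, L - t ∈ Icc 0 L := fun t ht =>
    ⟨by linarith [ht.2], by linarith [ht.1]⟩
  have := abs_sub_le_of_hasDerivAt_right (v := fun t => v (L - t)) (v' := fun t => -v' (L - t))
    (K := K) (hmem p hp) hh hε
    (fun t ht => ((hd (L - t) (hmem t ht)).comp t ((hasDerivAt_id t).const_sub L)).congr_deriv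
      (by simp))
    (fun t ht => by simpa using hC _ (hmem t ht))
    (fun t ht h1 h2 => by linarith [hdown (L - t) (hmem t ht) (by linarith) h2])
    (fun t ht h1 h2 => by linarith [hup (L - t) (hmem t ht) (by linarith) h2])
    (by simpa using hK) (L - s) ⟨by linarith, by linarith [hs.1]⟩
  simpa using this

end Propagation

theorem abs_sub_le_of_abs_inv_sub_le {w u ρ : ℝ} (hw : 0 < w) (hu : 0 < u)
    (h : |w⁻¹ - u⁻¹| ≤ ρ) (hρ : ρ ≤ 1 / (4 * u)) : |w - u| ≤ 2 * u ^ 2 * ρ := by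
  have hwu : w ≤ 2 * u := by
    have : (2 * u)⁻¹ ≤ w⁻¹ := by
      have := (abs_le.mp h).1
      rw [show 1 / (4 * u) = u⁻¹ / 4 by field_simp] at hρ
      rw [mul_inv]
      linarith [inv_pos.mpr hu]
    exact (inv_le_inv₀ (by positivity) hw).mp this
  have he : w - u = w * u * (u⁻¹ - w⁻¹) := by field_simp
  rw [he, abs_mul, abs_of_pos (mul_pos hw hu), abs_sub_comm]
  have := mul_le_mul_of_nonneg_right hwu hu.le
  calc w * u * |w⁻¹ - u⁻¹| ≤ (2 * u * u) * ρ := mul_le_mul this h (abs_nonneg _) (by positivity)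
    _ = 2 * u ^ 2 * ρ := by ring

-- `(3Q + inscribedGap₄Bound C Q / 4) ℓ / (4Θ²) + C` with `Q = 4(1 + 2Θ)`, the bound for `κ + 2Θ`
-- on every window used.
def pinchingConst (C Θ ℓ : ℝ) : ℝ :=
  (12 * (1 + 2 * Θ) + inscribedGap₄Bound C (4 * (1 + 2 * Θ)) / 4) * ℓ / (4 * Θ ^ 2) + C

theorem IsControlledArc.abs_curv_sub_one_le {γ : ℝ → ℝ × ℝ} {L C Θ : ℝ}
    (hγ : IsControlledArc γ L C Θ) (hC : 0 ≤ C) (hΘ : 0 < Θ) {ℓ c h p : ℝ} (hLℓ : L ≤ ℓ)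
    (hh : 0 < h) (hh1 : h ≤ 1) (hc1 : 1 ≤ c) (hch : c ≤ 1 + h ^ 2)
    (hin : ∀ s ∈ Icc 0 L, ∀ t ∈ Icc 0 L, 0 ≤ inscribedGap γ c s t)
    (hp : p ∈ Icc 0 L) (hp1 : curv γ p = 1)
    (hsmall : pinchingConst C Θ ℓ * h ≤ 1 / (4 * (1 + 2 * Θ))) :
    ∀ s ∈ Icc 0 L, |curv γ s - 1| ≤ 2 * (1 + 2 * Θ) ^ 2 * (pinchingConst C Θ ℓ * h) := by
  set u := 1 + 2 * Θ with hu_def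
  set Q := 4 * u with hQ_def
  set ε := (3 * Q + inscribedGap₄Bound C Q / 4) * h / (4 * Θ ^ 2) with hε_def
  have hu : 0 < u := by linarith
  have hM := inscribedGap₄Bound_nonneg hC (by positivity : 0 ≤ Q)
  have hε : 0 ≤ ε := by positivity
  have hℓ : 0 < ℓ := hγ.length_pos.trans_le hLℓ
  have hρ : ε * L + C * h ≤ pinchingConst C Θ ℓ * h := by
    have : ε * ℓ + C * h = pinchingConst C Θ ℓ * h := by
      simp only [hε_def, hQ_def, hu_def, pinchingConst]; ring
    linarith [mul_le_mul_of_nonneg_left hLℓ hε]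
  have hCh : C * h ≤ 1 / Q := by
    have : 0 ≤ ε * L := mul_nonneg hε hγ.length_pos.le
    linarith
  have hvp : (curv γ p + 2 * Θ)⁻¹ = u⁻¹ := by rw [hp1]
  have hK : 2 / Q < (curv γ p + 2 * Θ)⁻¹ - (ε * L + C * h) := by
    have : 1 / (4 * u) = u⁻¹ / 4 := by field_simp
    have : 2 / Q = u⁻¹ / 2 := by rw [hQ_def]; field_simp; ring
    linarith [inv_pos.mpr hu]
  intro s hs
  have hvs := abs_sub_le_of_hasDerivAt hp hh.le hε (K := 2 / Q)
    (fun t ht => hγ.hasDerivAt_inv_curv_add hΘ.le ht)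
    (fun t ht => hγ.abs_deriv_inv_curv_add_le hΘ.le ht)
    (fun t ht hth hvt => hγ.neg_le_deriv_inv_curv_add hC hΘ hc1 hch hh hh1 (by positivity) hCh
      ht hth hvt (hin t ht (t + h) ⟨by linarith [ht.1], hth⟩))
    (fun t ht hth hvt => hγ.deriv_inv_curv_add_le hC hΘ hc1 hch hh hh1 (by positivity) hCh
      ht hth hvt (hin t ht (t - h) ⟨by linarith, by linarith [ht.2]⟩)) hK s hs
  rw [hvp] at hvs
  have := abs_sub_le_of_abs_inv_sub_le (by linarith [hγ.curv_pos s hs]) hu hvs (hρ.trans hsmall)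
  calc |curv γ s - 1| = |curv γ s + 2 * Θ - u| := by rw [hu_def]; ring_nf
    _ ≤ 2 * u ^ 2 * (ε * L + C * h) := this
    _ ≤ 2 * u ^ 2 * (pinchingConst C Θ ℓ * h) := by gcongr

theorem abs_csInf_sub_le {A : Set ℝ} {a r : ℝ} (ha : a ∈ A) (h : ∀ x ∈ A, |x - a| ≤ r) :
    |sInf A - a| ≤ r := by
  have hbdd : BddBelow A := ⟨a - r, fun x hx => by linarith [(abs_le.mp (h x hx)).1]⟩
  have h1 : sInf A ≤ a := csInf_le hbdd ha
  have h2 : a - r ≤ sInf A := le_csInf ⟨a, ha⟩ fun x hx => by linarith [(abs_le.mp (h x hx)).1]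
  have hr : 0 ≤ r := by simpa using h a ha
  exact abs_le.mpr ⟨by linarith, by linarith⟩

theorem stmt3 (Csharp Θ : ℝ) (hC : 0 < Csharp) (hΘ : 0 < Θ)
    (L : ℕ → ℝ) (γ : ℕ → ℝ → ℝ × ℝ) (p : ℕ → ℝ)
    (hL : ∀ j : ℕ, 1 ≤ j → 0 < L j ∧ L j ≤ 4 * π)
    (hsm : ∀ j : ℕ, 1 ≤ j → ContDiff ℝ 4 (γ j))
    (hunit : ∀ j : ℕ, 1 ≤ j → ∀ s ∈ Icc 0 (L j), nsq (deriv (γ j) s) = 1)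
    (hκpos : ∀ j : ℕ, 1 ≤ j → ∀ s ∈ Icc 0 (L j), 0 < curv (γ j) s)
    (hκ' : ∀ j : ℕ, 1 ≤ j → ∀ s ∈ Icc 0 (L j),
      |deriv (curv (γ j)) s| ≤ Csharp * (curv (γ j) s + 2 * Θ) ^ 2)
    (hκ'' : ∀ j : ℕ, 1 ≤ j → ∀ s ∈ Icc 0 (L j),
      |deriv (deriv (curv (γ j))) s| ≤ Csharp * (curv (γ j) s + 2 * Θ) ^ 3)
    (hin : ∀ j : ℕ, 1 ≤ j → ∀ s ∈ Icc 0 (L j), ∀ t ∈ Icc 0 (L j),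
      (1 + 1 / (j : ℝ)) * curv (γ j) s / 2 * nsq (γ j s - γ j t)
        - dot (γ j s - γ j t) (nor (γ j) s) ≥ 0)
    (hp : ∀ j : ℕ, 1 ≤ j → p j ∈ Icc 0 (L j) ∧ curv (γ j) (p j) = 1) :
    Tendsto (fun j : ℕ => sInf (curv (γ j) '' Icc 0 (L j))) atTop (nhds 1) := by
  set P := pinchingConst Csharp Θ (4 * π)
  -- `h = j^{-1/2}`, so that `c - 1 = 1/j = h²`.
  have hrate : Tendsto (fun j : ℕ => P * (√j)⁻¹) atTop (𝓝 0) := by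
    simpa using ((tendsto_inv_atTop_zero.comp
      (Real.tendsto_sqrt_atTop.comp tendsto_natCast_atTop_atTop)).const_mul P)
  have hpinch : ∀ᶠ j : ℕ in atTop, |sInf (curv (γ j) '' Icc 0 (L j)) - 1|
      ≤ 2 * (1 + 2 * Θ) ^ 2 * (P * (√j)⁻¹) := by
    filter_upwards [eventually_ge_atTop 1,
      hrate.eventually (Iic_mem_nhds (by positivity : (0 : ℝ) < 1 / (4 * (1 + 2 * Θ))))]
      with j hj hsmall
    have hsqrt : 1 ≤ √(j : ℝ) := Real.one_le_sqrt.mpr (by exact_mod_cast hj)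
    have hγ : IsControlledArc (γ j) (L j) Csharp Θ :=
      ⟨⟨hsm j hj, (hL j hj).1, hunit j hj⟩, hκpos j hj, hκ' j hj, hκ'' j hj⟩
    have hpinch := hγ.abs_curv_sub_one_le hC.le hΘ (hL j hj).2 (by positivity)
      (inv_le_one_of_one_le₀ hsqrt) (le_add_of_nonneg_right (by positivity))
      (by rw [inv_pow, Real.sq_sqrt (Nat.cast_nonneg j), one_div])
      (fun s hs t ht => hin j hj s hs t ht) (hp j hj).1 (hp j hj).2 hsmall
    exact abs_csInf_sub_le ⟨p j, hp j hj⟩ (by rintro _ ⟨s, hs, rfl⟩; exact hpinch s hs)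
  rw [tendsto_iff_norm_sub_tendsto_zero]
  exact squeeze_zero' (.of_forall fun _ => norm_nonneg _) hpinch
    (by simpa using hrate.const_mul (2 * (1 + 2 * Θ) ^ 2))

end
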